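/- The sequence {D_n}_{n≥0} of Domb numbers is ratio log-concave, i.e., D_n^3 D_{n-2} ≥ D_{n+1} D_{n-1}^3 for all n ≥ 2; consequently the sequence {D_n^{1/n}}_{n≥1} is strictly log-concave. -/

import Mathlib

set_option maxHeartbeats 1000000


-- certificate lemma for part 1 (ratio log-concavity)
lemma dombP1cert (m b c : ℝ) (hm : 2 ≤ m) (hb : 0 < b)
    (h1 : (4*m+1)^2*b ≤ (m+1)^2*c) (h2 : (m+1)^2*c ≤ 4*(4*m^2+2*m+1)*b) :
    0 ≤ (m+2)^3*c^3*(2*(2*m+1)*(5*m^2+5*m+2)*b - (m+1)^3*c)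
      - 64*m^3*(2*(2*m+3)*(5*m^2+15*m+12)*c - 64*(m+1)^3*b)*b^3 := by
  have hm0 : (0:ℝ) ≤ m := by linarith
  have hβ : 0 ≤ (m+1)^2*c - (4*m+1)^2*b := by linarith
  have hγ : 0 ≤ 4*(4*m^2+2*m+1)*b - (m+1)^2*c := by linarith
  have hc : 0 < c := by nlinarith [sq_nonneg (4*m+1), sq_nonneg (m+1)]
  have ht : (0:ℝ) ≤ m - 2 := by linarith
  have hh0 : 0 ≤ 24 - 228*m - 1314*m^2 - 1527*m^3 + 7293*m^4 + 28233*m^5 + 42861*m^6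
      + 34806*m^7 + 15876*m^8 + 3840*m^9 + 384*m^10 := by
    nlinarith [pow_nonneg ht 2, pow_nonneg ht 3, pow_nonneg ht 4, pow_nonneg ht 5,
      pow_nonneg ht 6, pow_nonneg ht 7, pow_nonneg ht 8, pow_nonneg ht 9, pow_nonneg ht 10, ht]
  have hH : 0 ≤ (24 + 108*m + 198*m^2 + 189*m^3 + 99*m^4 + 27*m^5 + 3*m^6)*((m+1)^2*c)^2
      + (24 + 156*m + 798*m^2 + 2217*m^3 + 3309*m^4 + 2793*m^5 + 1341*m^6 + 342*m^7 + 36*m^8)*((m+1)^2*c)*b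
      + (24 - 228*m - 1314*m^2 - 1527*m^3 + 7293*m^4 + 28233*m^5 + 42861*m^6
      + 34806*m^7 + 15876*m^8 + 3840*m^9 + 384*m^10)*b^2 := by
    have t1 : 0 ≤ ((m+1)^2*c)^2 := sq_nonneg _
    have t2 : 0 ≤ ((m+1)^2*c)*b := by positivity
    have t3 : 0 ≤ b^2 := sq_nonneg _
    have p1 : (0:ℝ) ≤ 24 + 108*m + 198*m^2 + 189*m^3 + 99*m^4 + 27*m^5 + 3*m^6 := by positivity
    have p2 : (0:ℝ) ≤ 24 + 156*m + 798*m^2 + 2217*m^3 + 3309*m^4 + 2793*m^5 + 1341*m^6 + 342*m^7 + 36*m^8 := by positivity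
    have := mul_nonneg p1 t1
    have := mul_nonneg p2 t2
    have := mul_nonneg hh0 t3
    linarith
  have hgl : (0:ℝ) ≤ 24 + 732*m + 9918*m^2 + 78201*m^3 + 378309*m^4 + 1170849*m^5 + 2395557*m^6
      + 3282126*m^7 + 2980932*m^8 + 1732992*m^9 + 601152*m^10 + 107904*m^11 + 6912*m^12 := by positivity
  have hgu : (0:ℝ) ≤ 3072*m + 32256*m^2 + 169728*m^3 + 561792*m^4 + 1285248*m^5 + 2080128*m^6
      + 2371200*m^7 + 1858560*m^8 + 946176*m^9 + 278016*m^10 + 35328*m^11 := by positivity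
  have key : 3*(m+1)^8 * ((m+2)^3*c^3*(2*(2*m+1)*(5*m^2+5*m+2)*b - (m+1)^3*c)
      - 64*m^3*(2*(2*m+3)*(5*m^2+15*m+12)*c - 64*(m+1)^3*b)*b^3)
      = (24 + 732*m + 9918*m^2 + 78201*m^3 + 378309*m^4 + 1170849*m^5 + 2395557*m^6
      + 3282126*m^7 + 2980932*m^8 + 1732992*m^9 + 601152*m^10 + 107904*m^11 + 6912*m^12)
        * (4*(4*m^2+2*m+1)*b - (m+1)^2*c) * b^3
      + (3072*m + 32256*m^2 + 169728*m^3 + 561792*m^4 + 1285248*m^5 + 2080128*m^6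
      + 2371200*m^7 + 1858560*m^8 + 946176*m^9 + 278016*m^10 + 35328*m^11)
        * ((m+1)^2*c - (4*m+1)^2*b) * b^3
      + ((m+1)^2*c - (4*m+1)^2*b) * (4*(4*m^2+2*m+1)*b - (m+1)^2*c)
        * ((24 + 108*m + 198*m^2 + 189*m^3 + 99*m^4 + 27*m^5 + 3*m^6)*((m+1)^2*c)^2
      + (24 + 156*m + 798*m^2 + 2217*m^3 + 3309*m^4 + 2793*m^5 + 1341*m^6 + 342*m^7 + 36*m^8)*((m+1)^2*c)*b
      + (24 - 228*m - 1314*m^2 - 1527*m^3 + 7293*m^4 + 28233*m^5 + 42861*m^6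
      + 34806*m^7 + 15876*m^8 + 3840*m^9 + 384*m^10)*b^2) := by
    ring
  have hb3 : (0:ℝ) ≤ b^3 := by positivity
  have T1 := mul_nonneg (mul_nonneg hgl hγ) hb3
  have T2 := mul_nonneg (mul_nonneg hgu hβ) hb3
  have T3 := mul_nonneg (mul_nonneg hβ hγ) hH
  have hpos : (0:ℝ) < 3*(m+1)^8 := by positivity
  have h9 : 3*(m+1)^8 * 0 ≤ 3*(m+1)^8 * ((m+2)^3*c^3*(2*(2*m+1)*(5*m^2+5*m+2)*b - (m+1)^3*c)
      - 64*m^3*(2*(2*m+3)*(5*m^2+15*m+12)*c - 64*(m+1)^3*b)*b^3) := by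
    rw [mul_zero, key]; linarith
  exact le_of_mul_le_mul_left h9 hpos


section
variable (D : ℕ → ℝ)

lemma dombRec (hrec : ∀ n : ℕ, 2 ≤ n →
      (n:ℝ)^3 * D n = 2*(2*(n:ℝ) - 1)*(5*(n:ℝ)^2 - 5*(n:ℝ) + 2) * D (n-1)
        - 64*((n:ℝ) - 1)^3 * D (n-2)) (m : ℕ) :
    ((m:ℝ)+2)^3 * D (m+2) = 2*(2*(m:ℝ)+3)*(5*(m:ℝ)^2+15*(m:ℝ)+12) * D (m+1)
      - 64*((m:ℝ)+1)^3 * D m := by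
  have h := hrec (m+2) (by omega)
  simp only [show m+2-1 = m+1 by omega, show m+2-2 = m by omega] at h
  push_cast at h
  calc ((m:ℝ)+2)^3 * D (m+2) = 2*(2*((m:ℝ)+2) - 1)*(5*((m:ℝ)+2)^2 - 5*((m:ℝ)+2) + 2) * D (m+1)
        - 64*(((m:ℝ)+2) - 1)^3 * D m := h
    _ = _ := by ring

lemma dombBounds (hD0 : D 0 = 1) (hD1 : D 1 = 4)
    (hrec : ∀ n : ℕ, 2 ≤ n →
      (n:ℝ)^3 * D n = 2*(2*(n:ℝ) - 1)*(5*(n:ℝ)^2 - 5*(n:ℝ) + 2) * D (n-1)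
        - 64*((n:ℝ) - 1)^3 * D (n-2)) :
    D 2 = 28 ∧ D 3 = 256 ∧ ∀ m : ℕ, 2 ≤ m → 0 < D m ∧ 0 < D (m+1) ∧
      (4*(m:ℝ)+1)^2 * D m ≤ ((m:ℝ)+1)^2 * D (m+1) ∧
      ((m:ℝ)+1)^2 * D (m+1) ≤ 4*(4*(m:ℝ)^2+2*(m:ℝ)+1) * D m := by
  have h2 := dombRec D hrec 0
  have h3 := dombRec D hrec 1
  rw [hD0, hD1] at h2
  have hD2 : D 2 = 28 := by norm_num at h2; linarith
  rw [hD1, hD2] at h3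
  have hD3 : D 3 = 256 := by norm_num at h3; linarith
  refine ⟨hD2, hD3, ?_⟩
  intro m hm
  induction m, hm using Nat.le_induction with
  | base => rw [show (2:ℕ)+1 = 3 from rfl, hD2, hD3]; norm_num
  | succ m hm ih =>
    obtain ⟨hb, hc, hlow, hup⟩ := ih
    have hr := dombRec D hrec m
    set ν : ℝ := (m:ℝ) with hν
    have hν2 : (2:ℝ) ≤ ν := by rw [hν]; exact_mod_cast hm
    have hν0 : (0:ℝ) < ν := by linarith
    have hfact : ((m+1:ℕ):ℝ) = ν + 1 := by push_cast; ring
    rw [hfact]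
    have hr2 : (ν+2)*(4*ν+1)^2 * (((ν+2))^3 * D (m+2))
        = (ν+2)*(4*ν+1)^2 * (2*(2*ν+3)*(5*ν^2+15*ν+12) * D (m+1) - 64*(ν+1)^3 * D m) := by
      rw [hr]
    have ht : (0:ℝ) ≤ ν - 2 := by linarith
    have hF1 : (0:ℝ) ≤ 36*ν^3 - 6*ν^2 - 111*ν - 42 := by
      nlinarith [pow_nonneg ht 2, pow_nonneg ht 3, ht]
    have hlow' : (4*(ν+1)+1)^2 * D (m+1) ≤ (ν+1+1)^2 * D (m+2) := by
      have T1 : 0 ≤ (ν+2)*(64*(ν+1)^3) * ((ν+1)^2 * D (m+1) - (4*ν+1)^2 * D m) :=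
        mul_nonneg (by positivity) (by linarith)
      have T2 : 0 ≤ ((ν+2)*(36*ν^3 - 6*ν^2 - 111*ν - 42)) * D (m+1) :=
        mul_nonneg (mul_nonneg (by linarith) hF1) hc.le
      have hpos : (0:ℝ) < (ν+2)^2*(4*ν+1)^2 := by positivity
      have h9 : (ν+2)^2*(4*ν+1)^2 * ((4*(ν+1)+1)^2 * D (m+1))
          ≤ (ν+2)^2*(4*ν+1)^2 * ((ν+1+1)^2 * D (m+2)) := by nlinarith [hr2, T1, T2]
      exact le_of_mul_le_mul_left h9 hpos
    have hd2pos : 0 < D (m+2) := by nlinarith [hlow', hc, sq_nonneg (4*(ν+1)+1), sq_nonneg (ν+1+1), hν2]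
    refine ⟨hc, hd2pos, hlow', ?_⟩
    · -- upper
      have T1 : 0 ≤ (ν+2)*(64*(ν+1)^3) * (4*(4*ν^2+2*ν+1) * D m - (ν+1)^2 * D (m+1)) :=
        mul_nonneg (by positivity) (by linarith)
      have T2 : 0 ≤ ((ν+2)*(72*ν^2 + 72*ν)) * D (m+1) := by positivity
      have hr3 : (ν+2)*(4*(4*ν^2+2*ν+1)) * (((ν+2))^3 * D (m+2))
          = (ν+2)*(4*(4*ν^2+2*ν+1)) * (2*(2*ν+3)*(5*ν^2+15*ν+12) * D (m+1) - 64*(ν+1)^3 * D m) := by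
        rw [hr]
      have hpos : (0:ℝ) < (ν+2)^2*(4*(4*ν^2+2*ν+1)) := by positivity
      have h9 : (ν+2)^2*(4*(4*ν^2+2*ν+1)) * ((ν+1+1)^2 * D (m+2))
          ≤ (ν+2)^2*(4*(4*ν^2+2*ν+1)) * (4*(4*(ν+1)^2+2*(ν+1)+1) * D (m+1)) := by
        nlinarith [hr3, T1, T2]
      exact le_of_mul_le_mul_left h9 hpos
end


lemma dombRatioCert (ν b c : ℝ) (hν : 2 ≤ ν) (hb : 0 < b)
    (h1 : (4*ν-3)^2*b ≤ ν^2*c) :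
    ν^2 * (2*(2*ν+1)*(5*ν^2+5*ν+2) * c - 64*ν^3 * b) * b ≤ (ν^2+2)*(ν+1)^3 * c^2 := by
  have ht : (0:ℝ) ≤ ν - 2 := by linarith
  have hβ : 0 ≤ ν^2*c - (4*ν-3)^2*b := by linarith
  have hq0 : (0:ℝ) ≤ 162 - 378*ν - 297*ν^2 + 1029*ν^3 - ν^4 - 801*ν^5 + 210*ν^6 + 92*ν^7 := by
    nlinarith [pow_nonneg ht 2, pow_nonneg ht 3, pow_nonneg ht 4, pow_nonneg ht 5,
      pow_nonneg ht 6, pow_nonneg ht 7, ht]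
  have hq1 : (0:ℝ) ≤ 36 + 12*ν - 98*ν^2 - 54*ν^3 + 34*ν^4 + 16*ν^5 + 18*ν^6 + 12*ν^7 := by
    nlinarith [pow_nonneg ht 2, pow_nonneg ht 3, pow_nonneg ht 4, pow_nonneg ht 5,
      pow_nonneg ht 6, pow_nonneg ht 7, ht]
  have T0 : 0 ≤ (162 - 378*ν - 297*ν^2 + 1029*ν^3 - ν^4 - 801*ν^5 + 210*ν^6 + 92*ν^7) * b^2 :=
    mul_nonneg hq0 (sq_nonneg b)
  have T1 : 0 ≤ ((36 + 12*ν - 98*ν^2 - 54*ν^3 + 34*ν^4 + 16*ν^5 + 18*ν^6 + 12*ν^7) * b)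
      * (ν^2*c - (4*ν-3)^2*b) := mul_nonneg (mul_nonneg hq1 hb.le) hβ
  have T2 : 0 ≤ ((ν^2+2)*(ν+1)^3) * (ν^2*c - (4*ν-3)^2*b)^2 :=
    mul_nonneg (by positivity) (sq_nonneg _)
  have key : ν^4 * ((ν^2+2)*(ν+1)^3 * c^2 - ν^2 * (2*(2*ν+1)*(5*ν^2+5*ν+2) * c - 64*ν^3 * b) * b)
      = (162 - 378*ν - 297*ν^2 + 1029*ν^3 - ν^4 - 801*ν^5 + 210*ν^6 + 92*ν^7) * b^2
      + ((36 + 12*ν - 98*ν^2 - 54*ν^3 + 34*ν^4 + 16*ν^5 + 18*ν^6 + 12*ν^7) * b)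
          * (ν^2*c - (4*ν-3)^2*b)
      + ((ν^2+2)*(ν+1)^3) * (ν^2*c - (4*ν-3)^2*b)^2 := by ring
  have hpos : (0:ℝ) < ν^4 := by positivity
  have h9 : ν^4 * (ν^2 * (2*(2*ν+1)*(5*ν^2+5*ν+2) * c - 64*ν^3 * b) * b)
      ≤ ν^4 * ((ν^2+2)*(ν+1)^3 * c^2) := by nlinarith [key, T0, T1, T2]
  exact le_of_mul_le_mul_left h9 hpos

section
variable (D : ℕ → ℝ)

lemma dombGrowth
    (hkey : ∀ m : ℕ, 2 ≤ m → 0 < D m ∧ 0 < D (m+1) ∧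
      (4*(m:ℝ)+1)^2 * D m ≤ ((m:ℝ)+1)^2 * D (m+1) ∧
      ((m:ℝ)+1)^2 * D (m+1) ≤ 4*(4*(m:ℝ)^2+2*(m:ℝ)+1) * D m)
    (hD4 : D 4 = 2716) :
    ∀ n : ℕ, 4 ≤ n → D n ≤ 9/25*(1-1/(n:ℝ))*((4*(n:ℝ)-3)/(n:ℝ))^(2*n) := by
  intro n hn
  induction n, hn using Nat.le_induction with
  | base => rw [hD4]; norm_num
  | succ n hn ih =>
    obtain ⟨hb, hc, hlow, hup⟩ := hkey n (by omega)
    set ν : ℝ := (n:ℝ) with hνdef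
    have hν : (4:ℝ) ≤ ν := by rw [hνdef]; exact_mod_cast hn
    have hν0 : (0:ℝ) < ν := by linarith
    have hcast : ((n+1:ℕ):ℝ) = ν + 1 := by push_cast; ring
    rw [hcast]
    have hone : (0:ℝ) ≤ 1 - 1/ν := by
      have : 1/ν ≤ 1 := by rw [div_le_one hν0]; linarith
      linarith
    have hbase : (0:ℝ) ≤ (4*ν-3)/ν := div_nonneg (by linarith) (by linarith)
    have hbase2 : (4*ν-3)/ν ≤ (4*(ν+1)-3)/(ν+1) := by
      rw [div_le_div_iff₀ (by linarith) (by linarith)]; nlinarith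
    have hmono : ((4*ν-3)/ν)^(2*n) ≤ ((4*(ν+1)-3)/(ν+1))^(2*n) :=
      pow_le_pow_left₀ hbase hbase2 _
    have hcoefpos : (0:ℝ) ≤ 9/25*(1-1/ν) := by linarith
    have ih2 : D n ≤ 9/25*(1-1/ν)*((4*(ν+1)-3)/(ν+1))^(2*n) :=
      le_trans ih (mul_le_mul_of_nonneg_left hmono hcoefpos)
    have hq : D (n+1) ≤ 4*(4*ν^2+2*ν+1)/(ν+1)^2 * D n := by
      rw [div_mul_eq_mul_div, le_div_iff₀ (by positivity)]; linarith
    have hqpos : (0:ℝ) ≤ 4*(4*ν^2+2*ν+1)/(ν+1)^2 := by positivity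
    have hxpos : (0:ℝ) ≤ ((4*(ν+1)-3)/(ν+1))^(2*n) := pow_nonneg (div_nonneg (by linarith) (by linarith)) _
    have hcoef : 4*(4*ν^2+2*ν+1)/(ν+1)^2 * (9/25*(1-1/ν))
        ≤ 9/25*(1-1/(ν+1)) * ((4*(ν+1)-3)/(ν+1))^2 := by
      have e1 : 4*(4*ν^2+2*ν+1)/(ν+1)^2 * (9/25*(1-1/ν))
          = (36*(4*ν^2+2*ν+1)*(ν-1))/(25*ν*(ν+1)^2) := by
        field_simp; ring
      have e2 : 9/25*(1-1/(ν+1)) * ((4*(ν+1)-3)/(ν+1))^2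
          = (9*ν*(4*ν+1)^2)/(25*(ν+1)^3) := by
        field_simp; ring
      rw [e1, e2, div_le_div_iff₀ (by positivity) (by positivity)]
      nlinarith [hν0, hν, sq_nonneg ν, pow_pos hν0 2, pow_pos hν0 3,
        mul_pos (mul_pos hν0 hν0) hν0]
    calc D (n+1) ≤ 4*(4*ν^2+2*ν+1)/(ν+1)^2 * D n := hq
      _ ≤ 4*(4*ν^2+2*ν+1)/(ν+1)^2 * (9/25*(1-1/ν)*((4*(ν+1)-3)/(ν+1))^(2*n)) :=
          mul_le_mul_of_nonneg_left ih2 hqpos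
      _ = (4*(4*ν^2+2*ν+1)/(ν+1)^2 * (9/25*(1-1/ν))) * ((4*(ν+1)-3)/(ν+1))^(2*n) := by ring
      _ ≤ (9/25*(1-1/(ν+1)) * ((4*(ν+1)-3)/(ν+1))^2) * ((4*(ν+1)-3)/(ν+1))^(2*n) :=
          mul_le_mul_of_nonneg_right hcoef hxpos
      _ = 9/25*(1-1/(ν+1))*((4*(ν+1)-3)/(ν+1))^(2*(n+1)) := by
          rw [show 2*(n+1) = 2*n+2 by ring, pow_add]; ring
end

section
variable (D : ℕ → ℝ)

-- PART 1 for n = k+3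
lemma dombPart1 (hrec : ∀ n : ℕ, 2 ≤ n →
      (n:ℝ)^3 * D n = 2*(2*(n:ℝ) - 1)*(5*(n:ℝ)^2 - 5*(n:ℝ) + 2) * D (n-1)
        - 64*((n:ℝ) - 1)^3 * D (n-2))
    (hkey : ∀ m : ℕ, 2 ≤ m → 0 < D m ∧ 0 < D (m+1) ∧
      (4*(m:ℝ)+1)^2 * D m ≤ ((m:ℝ)+1)^2 * D (m+1) ∧
      ((m:ℝ)+1)^2 * D (m+1) ≤ 4*(4*(m:ℝ)^2+2*(m:ℝ)+1) * D m)
    (k : ℕ) : D (k+4) * D (k+2)^3 ≤ D (k+3)^3 * D (k+1) := by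
  obtain ⟨hb, hc, h1, h2⟩ := hkey (k+2) (by omega)
  simp only [show k+2+1 = k+3 by omega] at hc h1 h2
  set μ : ℝ := (k:ℝ)+2 with hμdef
  have hcast : ((k+2:ℕ):ℝ) = μ := by rw [hμdef]; push_cast; ring
  rw [hcast] at h1 h2
  have hμ2 : (2:ℝ) ≤ μ := by rw [hμdef]; nlinarith [Nat.cast_nonneg (α := ℝ) k]
  have cert := dombP1cert μ (D (k+2)) (D (k+3)) hμ2 hb h1 h2
  have hr1 := dombRec D hrec (k+1)
  have hr2 := dombRec D hrec (k+2)
  simp only [show k+1+2 = k+3 by omega, show k+1+1 = k+2 by omega] at hr1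
  simp only [show k+2+2 = k+4 by omega, show k+2+1 = k+3 by omega] at hr2
  have hc1 : ((k+1:ℕ):ℝ) = μ - 1 := by rw [hμdef]; push_cast; ring
  have hc2 : ((k+2:ℕ):ℝ) = μ := hcast
  rw [hc1] at hr1; rw [hc2] at hr2
  have hGeq : (μ+2)^3*(D (k+3))^3*(2*(2*μ+1)*(5*μ^2+5*μ+2)*(D (k+2)) - (μ+1)^3*(D (k+3)))
      - 64*μ^3*(2*(2*μ+3)*(5*μ^2+15*μ+12)*(D (k+3)) - 64*(μ+1)^3*(D (k+2)))*(D (k+2))^3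
      = 64*μ^3*(μ+2)^3*((D (k+3))^3 * D (k+1) - D (k+4) * (D (k+2))^3) := by
    linear_combination (-(μ+2)^3*(D (k+3))^3) * hr1 + (64*μ^3*(D (k+2))^3) * hr2
  rw [hGeq] at cert
  have hpos : (0:ℝ) < 64*μ^3*(μ+2)^3 := by positivity
  nlinarith [cert, hpos, mul_pos hpos hpos]

-- ratio bound for n = k+4
lemma dombRatio (hrec : ∀ n : ℕ, 2 ≤ n →
      (n:ℝ)^3 * D n = 2*(2*(n:ℝ) - 1)*(5*(n:ℝ)^2 - 5*(n:ℝ) + 2) * D (n-1)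
        - 64*((n:ℝ) - 1)^3 * D (n-2))
    (hkey : ∀ m : ℕ, 2 ≤ m → 0 < D m ∧ 0 < D (m+1) ∧
      (4*(m:ℝ)+1)^2 * D m ≤ ((m:ℝ)+1)^2 * D (m+1) ∧
      ((m:ℝ)+1)^2 * D (m+1) ≤ 4*(4*(m:ℝ)^2+2*(m:ℝ)+1) * D m)
    (k : ℕ) : ((k:ℝ)+4)^2 * (D (k+5) * D (k+3)) ≤ (((k:ℝ)+4)^2+2) * (D (k+4))^2 := by
  obtain ⟨hb, hc, h1, _⟩ := hkey (k+3) (by omega)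
  simp only [show k+3+1 = k+4 by omega] at hc h1
  set ν : ℝ := (k:ℝ)+4 with hνdef
  have hcast : ((k+3:ℕ):ℝ) = ν - 1 := by rw [hνdef]; push_cast; ring
  rw [hcast] at h1
  have h1' : (4*ν-3)^2 * D (k+3) ≤ ν^2 * D (k+4) := by
    calc (4*ν-3)^2 * D (k+3) = (4*(ν-1)+1)^2 * D (k+3) := by ring_nf
      _ ≤ (ν-1+1)^2 * D (k+4) := h1
      _ = ν^2 * D (k+4) := by ring_nf
  have hν2 : (2:ℝ) ≤ ν := by rw [hνdef]; nlinarith [Nat.cast_nonneg (α := ℝ) k]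
  have cert := dombRatioCert ν (D (k+3)) (D (k+4)) hν2 hb h1'
  have hr := dombRec D hrec (k+3)
  simp only [show k+3+2 = k+5 by omega, show k+3+1 = k+4 by omega] at hr
  rw [hcast] at hr
  have e : (ν+1)^3*(ν^2*(D (k+5) * D (k+3)))
      = ν^2 * (2*(2*ν+1)*(5*ν^2+5*ν+2) * D (k+4) - 64*ν^3 * D (k+3)) * D (k+3) := by
    linear_combination (ν^2 * D (k+3)) * hr
  have h9 : (ν+1)^3*(ν^2*(D (k+5) * D (k+3))) ≤ (ν+1)^3*((ν^2+2)*(D (k+4))^2) := by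
    rw [e]; nlinarith [cert]
  have hpos : (0:ℝ) < (ν+1)^3 := by positivity
  exact le_of_mul_le_mul_left h9 hpos
end

section
variable (D : ℕ → ℝ)

-- part 2 power inequality for n = k+4
lemma dombPart2pow
    (hkey : ∀ m : ℕ, 2 ≤ m → 0 < D m ∧ 0 < D (m+1) ∧
      (4*(m:ℝ)+1)^2 * D m ≤ ((m:ℝ)+1)^2 * D (m+1) ∧
      ((m:ℝ)+1)^2 * D (m+1) ≤ 4*(4*(m:ℝ)^2+2*(m:ℝ)+1) * D m)
    (hgrow : ∀ n : ℕ, 4 ≤ n → D n ≤ 9/25*(1-1/(n:ℝ))*((4*(n:ℝ)-3)/(n:ℝ))^(2*n))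
    (hrat : ∀ k : ℕ, ((k:ℝ)+4)^2 * (D (k+5) * D (k+3)) ≤ (((k:ℝ)+4)^2+2) * (D (k+4))^2)
    (k : ℕ) :
    D (k+5) ^ ((k+3)*(k+4)) * D (k+3) ^ ((k+4)*(k+5)) < D (k+4) ^ (2*((k+3)*(k+5))) := by
  obtain ⟨hb, hc, h1, _⟩ := hkey (k+3) (by omega)
  simp only [show k+3+1 = k+4 by omega] at hc h1
  have hd : 0 < D (k+5) := (hkey (k+4) (by omega)).2.1
  set ν : ℝ := (k:ℝ)+4 with hνdef
  have hν4 : (4:ℝ) ≤ ν := by rw [hνdef]; nlinarith [Nat.cast_nonneg (α := ℝ) k]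
  have hν0 : (0:ℝ) < ν := by linarith
  set b := D (k+3); set c := D (k+4); set d := D (k+5)
  have hcast : ((k+3:ℕ):ℝ) = ν - 1 := by rw [hνdef]; push_cast; ring
  rw [hcast] at h1
  have h1' : (4*ν-3)^2 * b ≤ ν^2 * c := by nlinarith [h1]
  -- ratio bound
  have hRL := hrat k
  rw [← hνdef] at hRL
  have hdb : d * b ≤ (1+2/ν^2) * c^2 := by
    have e : (1+2/ν^2) = (ν^2+2)/ν^2 := by field_simp
    rw [e, div_mul_eq_mul_div, le_div_iff₀ (by positivity)]
    nlinarith [hRL]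
  -- exp bound
  set m : ℕ := (k+3)*(k+4) with hmdef
  have hmcast : ((m:ℕ):ℝ) = (ν-1)*ν := by rw [hmdef, hνdef]; push_cast; ring
  have hexp : (1+2/ν^2)^m ≤ Real.exp 2 := by
    have e1 : (1+2/ν^2) ≤ Real.exp (2/ν^2) := by
      have := Real.add_one_le_exp (2/ν^2); linarith
    have e2 : (1+2/ν^2)^m ≤ Real.exp (2/ν^2)^m := pow_le_pow_left₀ (by positivity) e1 m
    have e3 : Real.exp (2/ν^2)^m = Real.exp ((m:ℝ)*(2/ν^2)) := (Real.exp_nat_mul _ m).symm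
    have e4 : (m:ℝ)*(2/ν^2) ≤ 2 := by
      rw [hmcast]
      have : (ν-1)*ν*(2/ν^2) = 2 - 2/ν := by field_simp
      rw [this]
      have : 0 < 2/ν := by positivity
      linarith
    calc (1+2/ν^2)^m ≤ Real.exp (2/ν^2)^m := e2
      _ = Real.exp ((m:ℝ)*(2/ν^2)) := e3
      _ ≤ Real.exp 2 := Real.exp_le_exp.mpr e4
  have hE : Real.exp 2 ≤ 37/5 := by
    have h1e := Real.exp_one_lt_d9
    have e : Real.exp 2 = Real.exp 1 * Real.exp 1 := by
      rw [← Real.exp_add]; norm_num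
    nlinarith [Real.exp_pos 1]
  -- growth bound : c * b^(k+4) ≤ 9/25 * c^(k+4)
  have hg := hgrow (k+4) (by omega)
  have hgcast : ((k+4:ℕ):ℝ) = ν := by rw [hνdef]; push_cast; ring
  rw [hgcast] at hg
  have hLy : ((4*ν-3)/ν)^2 ≤ c/b := by
    rw [div_pow, div_le_div_iff₀ (by positivity) hb]
    nlinarith [h1']
  have hone : 9/25*(1-1/ν) ≤ 9/25 := by
    have : 0 < 1/ν := by positivity
    linarith
  have hLn : ((4*ν-3)/ν)^(2*(k+4)) ≤ (c/b)^(k+4) := by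
    rw [show 2*(k+4) = (k+4)*2 by ring, pow_mul']
    exact pow_le_pow_left₀ (sq_nonneg _) hLy (k+4)
  have hcb : c * b^(k+4) ≤ 9/25 * c^(k+4) := by
    have hgb : c ≤ 9/25 * (c/b)^(k+4) := by
      calc c ≤ 9/25*(1-1/ν)*((4*ν-3)/ν)^(2*(k+4)) := hg
        _ ≤ 9/25*(1-1/ν)*(c/b)^(k+4) := by
            apply mul_le_mul_of_nonneg_left hLn
            have : 1/ν ≤ 1 := by rw [div_le_one hν0]; linarith
            linarith
        _ ≤ 9/25*(c/b)^(k+4) := by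
            apply mul_le_mul_of_nonneg_right hone (pow_nonneg (by positivity) _)
    have hbpow : (0:ℝ) < b^(k+4) := pow_pos hb _
    calc c * b^(k+4) ≤ (9/25 * (c/b)^(k+4)) * b^(k+4) := mul_le_mul_of_nonneg_right hgb hbpow.le
      _ = 9/25 * c^(k+4) := by
          rw [div_pow, mul_assoc, div_mul_cancel₀]
          exact (pow_pos hb _).ne'
  -- assemble
  have step1 : d^m * b^((k+4)*(k+5)) * c^2 = (d*b)^m * (c*b^(k+4))^2 := by
    rw [show (k+4)*(k+5) = (k+3)*(k+4) + (k+4)*2 by ring, pow_add, pow_mul b (k+4) 2,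
      hmdef, mul_pow d b, mul_pow c (b^(k+4))]
    ring
  have hdbpos : (0:ℝ) ≤ d*b := mul_nonneg hd.le hb.le
  have step2 : (d*b)^m ≤ (1+2/ν^2)^m * c^(2*m) := by
    calc (d*b)^m ≤ ((1+2/ν^2) * c^2)^m := pow_le_pow_left₀ hdbpos hdb m
      _ = (1+2/ν^2)^m * c^(2*m) := by rw [mul_pow, ← pow_mul, mul_comm 2 m]
  have step3 : (c*b^(k+4))^2 ≤ (81/625) * c^(2*(k+4)) := by
    calc (c*b^(k+4))^2 ≤ (9/25 * c^(k+4))^2 :=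
        pow_le_pow_left₀ (mul_nonneg hc.le (pow_pos hb _).le) hcb 2
      _ = (81/625) * c^(2*(k+4)) := by rw [mul_pow, ← pow_mul, mul_comm (k+4) 2]; norm_num
  have hcpowpos : ∀ j : ℕ, (0:ℝ) < c^j := fun j => pow_pos hc j
  have step4 : d^m * b^((k+4)*(k+5)) * c^2 < c^(2*m + 2*(k+4)) := by
    rw [step1]
    have t1 : (d*b)^m * (c*b^(k+4))^2 ≤ ((1+2/ν^2)^m * c^(2*m)) * ((81/625) * c^(2*(k+4))) := by
      apply mul_le_mul step2 step3 (sq_nonneg _)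
      positivity
    have t2 : ((1+2/ν^2)^m * c^(2*m)) * ((81/625) * c^(2*(k+4)))
        ≤ ((37/5) * c^(2*m)) * ((81/625) * c^(2*(k+4))) := by
      have := le_trans hexp hE
      apply mul_le_mul_of_nonneg_right _ (by positivity)
      exact mul_le_mul_of_nonneg_right this (hcpowpos _).le
    have t3 : ((37/5) * c^(2*m)) * ((81/625) * c^(2*(k+4))) < c^(2*m + 2*(k+4)) := by
      rw [pow_add]
      have hpp : (0:ℝ) < c^(2*m) * c^(2*(k+4)) := mul_pos (hcpowpos _) (hcpowpos _)
      nlinarith [hpp]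
    linarith
  have eexp : 2*m + 2*(k+4) = 2*((k+3)*(k+5)) + 2 := by rw [hmdef]; ring
  rw [eexp, pow_add] at step4
  have := lt_of_mul_lt_mul_right step4 (sq_nonneg c)
  calc d^m * b^((k+4)*(k+5)) = d^((k+3)*(k+4)) * b^((k+4)*(k+5)) := by rw [hmdef]
    _ < c^(2*((k+3)*(k+5))) := this
end


lemma dombConvert (x y z : ℝ) (hx : 0 < x) (hy : 0 < y) (hz : 0 < z) (k : ℕ)
    (p q r : ℝ) (hp : p = (k:ℝ)+3) (hq : q = (k:ℝ)+1) (hr : r = (k:ℝ)+2)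
    (h : x ^ ((k+1)*(k+2)) * y ^ ((k+2)*(k+3)) < z ^ (2*((k+1)*(k+3)))) :
    x ^ (1/p) * y ^ (1/q) < (z ^ (1/r))^2 := by
  subst hp hq hr
  have hk0 : (0:ℝ) ≤ (k:ℝ) := Nat.cast_nonneg k
  set K : ℕ := (k+1)*(k+2)*(k+3) with hK
  have hKcast : ((K:ℕ):ℝ) = ((k:ℝ)+1)*((k:ℝ)+2)*((k:ℝ)+3) := by rw [hK]; push_cast; ring
  have e1 : (x ^ (1/((k:ℝ)+3)))^K = x ^ ((k+1)*(k+2)) := by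
    rw [← Real.rpow_natCast (x ^ (1/((k:ℝ)+3))) K, ← Real.rpow_mul hx.le,
      show 1/((k:ℝ)+3)*((K:ℕ):ℝ) = (((k+1)*(k+2) : ℕ):ℝ) by
        rw [hKcast]; push_cast; field_simp; try ring,
      Real.rpow_natCast]
  have e2 : (y ^ (1/((k:ℝ)+1)))^K = y ^ ((k+2)*(k+3)) := by
    rw [← Real.rpow_natCast (y ^ (1/((k:ℝ)+1))) K, ← Real.rpow_mul hy.le,
      show 1/((k:ℝ)+1)*((K:ℕ):ℝ) = (((k+2)*(k+3) : ℕ):ℝ) by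
        rw [hKcast]; push_cast; field_simp; try ring,
      Real.rpow_natCast]
  have e3 : ((z ^ (1/((k:ℝ)+2)))^2)^K = z ^ (2*((k+1)*(k+3))) := by
    rw [← pow_mul, ← Real.rpow_natCast (z ^ (1/((k:ℝ)+2))) (2*K), ← Real.rpow_mul hz.le,
      show 1/((k:ℝ)+2)*((2*K:ℕ):ℝ) = ((2*((k+1)*(k+3)) : ℕ):ℝ) by
        rw [hK]; push_cast; field_simp; try ring,
      Real.rpow_natCast]
  apply lt_of_pow_lt_pow_left₀ K (sq_nonneg _)
  rw [mul_pow, e1, e2, e3]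
  exact h


theorem stmt_19 (D : ℕ → ℝ) (hD0 : D 0 = 1) (hD1 : D 1 = 4)
    (hrec : ∀ n : ℕ, 2 ≤ n →
      (n:ℝ)^3 * D n = 2*(2*(n:ℝ) - 1)*(5*(n:ℝ)^2 - 5*(n:ℝ) + 2) * D (n-1)
        - 64*((n:ℝ) - 1)^3 * D (n-2)) :
    (∀ n : ℕ, 2 ≤ n → D (n+1) * (D (n-1))^3 ≤ (D n)^3 * D (n-2)) ∧
    (∀ n : ℕ, 2 ≤ n →
      D (n+1) ^ (1/((n:ℝ)+1)) * D (n-1) ^ (1/((n:ℝ)-1)) < (D n ^ (1/(n:ℝ)))^2) := by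
  obtain ⟨hD2, hD3, hkey⟩ := dombBounds D hD0 hD1 hrec
  have hD4 : D 4 = 2716 := by
    have h := dombRec D hrec 2
    norm_num at h
    rw [hD2, hD3] at h; linarith
  have hgrow := dombGrowth D hkey hD4
  have hrat := fun k => dombRatio D hrec hkey k
  have hpos : ∀ j : ℕ, 1 ≤ j → 0 < D j := by
    intro j hj
    rcases Nat.lt_or_ge j 2 with h|h
    · obtain rfl : j = 1 := by omega
      rw [hD1]; norm_num
    · exact (hkey j h).1
  constructor
  · intro n hn
    rcases Nat.lt_or_ge n 3 with h|h
    · obtain rfl : n = 2 := by omega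
      norm_num [hD0, hD1, hD2, hD3]
    · obtain ⟨k, rfl⟩ : ∃ k, n = k+3 := ⟨n-3, by omega⟩
      have := dombPart1 D hrec hkey k
      simpa [show k+3+1 = k+4 by omega, show k+3-1 = k+2 by omega,
        show k+3-2 = k+1 by omega] using this
  · intro n hn
    obtain ⟨k, rfl⟩ : ∃ k, n = k+2 := ⟨n-2, by omega⟩
    simp only [show k+2+1 = k+3 by omega, show k+2-1 = k+1 by omega]
    have hx : 0 < D (k+3) := hpos _ (by omega)
    have hy : 0 < D (k+1) := hpos _ (by omega)
    have hz : 0 < D (k+2) := hpos _ (by omega)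
    have hpow : D (k+3)^((k+1)*(k+2)) * D (k+1)^((k+2)*(k+3)) < D (k+2)^(2*((k+1)*(k+3))) := by
      match k with
      | 0 => rw [hD1, hD2, hD3]; norm_num
      | 1 => rw [hD2, hD3, hD4]; norm_num
      | (j+2) =>
        have hp := dombPart2pow D hkey hgrow hrat j
        simp only [show j+2+1 = j+3 by omega, show j+2+2 = j+4 by omega,
          show j+2+3 = j+5 by omega]
        convert hp using 2 <;> ring
    exact dombConvert (D (k+3)) (D (k+1)) (D (k+2)) hx hy hz k _ _ _
      (by push_cast; ring) (by push_cast; ring) (by push_cast; ring) hpow
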